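/- Let P ⊆ R be an ideal and suppose c := max{Eord_η(P) : η ∈ W} is a positive integer attained on W. Assume every point ξ ∈ W with Eord_ξ(P) = c satisfies ξ_1 = 0 (i.e. the hypersurface V = {x_1 = 0} contains the E-top locus of P; this is the static property of a hypersurface of E-maximal contact). Then the E-top locus equals the E-top locus of the coefficient ideal with control c!: {ξ ∈ W : Eord_ξ(P) = c} = {ξ ∈ W : ξ_1 = 0 and Eord_{ξ'}(C(P,c)) ≥ c!}. -/

import Mathlib

open MvPolynomial

noncomputable section

/-- The variable index type: `x`-variables indexed by `Fin s`, `y`-variables by `Fin r`. -/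
abbrev BV (s r : ℕ) : Type := Fin s ⊕ Fin r

/-- The polynomial ring `R = K[x_1,…,x_s,y_1,…,y_r]`. -/
abbrev BR (K : Type) [Field K] (s r : ℕ) : Type := MvPolynomial (BV s r) K

variable (K : Type) [Field K] (s r : ℕ)

/-- `W`: the set of points all of whose `y`-coordinates are nonzero. -/
def Wset : Set (BV s r → K) := {ξ | ∀ j : Fin r, ξ (Sum.inr j) ≠ 0}

/-- `I_ξ`: the ideal generated by the variables vanishing at `ξ`. -/
def Ivan (ξ : BV s r → K) : Ideal (BR K s r) :=
  Ideal.span {p : BR K s r | ∃ i : BV s r, ξ i = 0 ∧ p = X i}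

/-- `m_ξ`: the maximal ideal of polynomials vanishing at `ξ`. -/
def mAt (ξ : BV s r → K) : Ideal (BR K s r) := RingHom.ker (eval ξ)

instance mAt_isMaximal (ξ : BV s r → K) : (mAt K s r ξ).IsMaximal :=
  RingHom.ker_isMaximal_of_surjective _ (fun a => ⟨C a, eval_C a⟩)

/-- `O_ξ`: the localization of `R` at `m_ξ`. -/
abbrev Oloc (ξ : BV s r → K) : Type := Localization.AtPrime (mAt K s r ξ)

/-- The `E`-order of an ideal `J` at a point `ξ`:
`sup { m : J·O_ξ ⊆ (I_ξ·O_ξ)^m }`. -/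
def Eord (ξ : BV s r → K) (J : Ideal (BR K s r)) : ℕ∞ :=
  sSup ((fun m : ℕ => (m : ℕ∞)) ''
    {m : ℕ | J.map (algebraMap (BR K s r) (Oloc K s r ξ)) ≤
      ((Ivan K s r ξ).map (algebraMap (BR K s r) (Oloc K s r ξ))) ^ m})

/-- The order of an ideal `J` at a point `ξ`:
`sup { m : J·O_ξ ⊆ (m_ξ·O_ξ)^m }`. -/
def ordAt (ξ : BV s r → K) (J : Ideal (BR K s r)) : ℕ∞ :=
  sSup ((fun m : ℕ => (m : ℕ∞)) ''
    {m : ℕ | J.map (algebraMap (BR K s r) (Oloc K s r ξ)) ≤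
      ((mAt K s r ξ).map (algebraMap (BR K s r) (Oloc K s r ξ))) ^ m})

/-- `x^α`. -/
def xPow (α : Fin s → ℕ) : BR K s r := ∏ i, X (Sum.inl i) ^ α i

/-- `y^γ` for `γ ∈ ℕ^r`. -/
def yPow (γ : Fin r → ℕ) : BR K s r := ∏ j, X (Sum.inr j) ^ γ j

/-- positive part `γ₊` of `γ ∈ ℤ^r`. -/
def ipos (γ : Fin r → ℤ) : Fin r → ℕ := fun j => (γ j).toNat

/-- negative part `γ₋` of `γ ∈ ℤ^r`. -/
def ineg (γ : Fin r → ℤ) : Fin r → ℕ := fun j => (-(γ j)).toNat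

/-- a non-hyperbolic binomial `y^{γ₊}x^α − b·y^{γ₋}x^β`. -/
def nhb (γ : Fin r → ℤ) (α β : Fin s → ℕ) (b : K) : BR K s r :=
  yPow K s r (ipos r γ) * xPow K s r α - C b * yPow K s r (ineg r γ) * xPow K s r β

/-- a hyperbolic equation `y^{δ₋} − μ·y^{δ₊}`. -/
def hyp (δ : Fin r → ℤ) (μ : K) : BR K s r :=
  yPow K s r (ineg r δ) - C μ * yPow K s r (ipos r δ)

/-- a generator of a binomial ideal:
`x^λ(y^{δ₋} − μ y^{δ₊})` or `x^ν(y^{γ₊}x^α − b y^{γ₋}x^β)` with `α,β` of disjoint supports. -/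
def IsBinomGen (g : BR K s r) : Prop :=
  (∃ (lam : Fin s → ℕ) (δ : Fin r → ℤ) (μ : K),
      g = xPow K s r lam * hyp K s r δ μ) ∨
  (∃ (ν α β : Fin s → ℕ) (γ : Fin r → ℤ) (b : K),
      (∀ i, α i = 0 ∨ β i = 0) ∧ g = xPow K s r ν * nhb K s r γ α β b)

/-- a binomial ideal: an ideal generated by finitely many binomial generators. -/
def IsBinomialIdeal (J : Ideal (BR K s r)) : Prop :=
  ∃ S : Finset (BR K s r), (∀ g ∈ S, IsBinomGen K s r g) ∧ J = Ideal.span (S : Set (BR K s r))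

open Classical in
/-- `|ν|_ξ = Σ_{i : ξ_i = 0} ν_i` (sum over vanishing x-coordinates). -/
def nsumAt (ξ : BV s r → K) (ν : Fin s → ℕ) : ℕ :=
  ∑ i, if ξ (Sum.inl i) = 0 then ν i else 0


/-- `Option A ⊕ B ≃ Option (A ⊕ B)`. -/
def optSum (A B : Type) : Option A ⊕ B ≃ Option (A ⊕ B) :=
  ((Equiv.optionEquivSumPUnit A).sumCongr (Equiv.refl B)).trans <|
    (Equiv.sumAssoc A PUnit.{1} B).trans <|
      ((Equiv.refl A).sumCongr (Equiv.sumComm PUnit.{1} B)).trans <|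
        (Equiv.sumAssoc A B PUnit.{1}).symm.trans
          (Equiv.optionEquivSumPUnit (A ⊕ B)).symm

/-- The variables of `K[x_1,…,x_{s+1},y]` split as the variable `x_1` (the `none` case)
and the variables of `K[x_2,…,x_{s+1},y]`. -/
def varEquiv : BV (s + 1) r ≃ Option (BV s r) :=
  ((finSuccEquiv s).sumCongr (Equiv.refl (Fin r))).trans (optSum (Fin s) (Fin r))

/-- Identification of `R = K[x_1,…,x_{s+1},y]` with `R'[x_1]`, `R' = K[x_2,…,x_{s+1},y]`. -/
def toPoly : BR K (s + 1) r ≃ₐ[K] Polynomial (BR K s r) :=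
  (renameEquiv K (varEquiv s r)).trans (optionEquivLeft K (BV s r))

/-- `a_{f,k}`: the coefficient of `x_1^k` in `f` under the identification `R = R'[x_1]`. -/
def coeffAt (f : BR K (s + 1) r) (k : ℕ) : BR K s r :=
  (toPoly K s r f).coeff k

/-- The coefficient ideal `C(P,c)` of `P` along `E` with respect to `V = {x_1 = 0}`,
with factorial normalization: it is generated by the `a_{f,k}^{c!/(c-k)}`, `f ∈ P`, `k < c`. -/
def coeffIdeal (P : Ideal (BR K (s + 1) r)) (c : ℕ) : Ideal (BR K s r) :=
  Ideal.span {g : BR K s r |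
    ∃ f ∈ P, ∃ k < c, g = coeffAt K s r f k ^ (Nat.factorial c / (c - k))}

/-- `ξ'`: the point `ξ` with its first (`x_1`) coordinate removed. -/
def resPt (ξ : BV (s + 1) r → K) : BV s r → K :=
  fun v => match v with
  | Sum.inl i => ξ (Sum.inl i.succ)
  | Sum.inr j => ξ (Sum.inr j)

open Classical in
/-- The chart morphism `σ_j` of the blow-up along `Z = ∩_{i ∈ I} {x_i = 0}`:
`x_i ↦ x_i·x_j` for `i ∈ I ∖ {j}`, all other variables are fixed. -/
def chart (I : Finset (Fin s)) (j : Fin s) : BR K s r →ₐ[K] BR K s r :=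
  aeval (fun v : BV s r => match v with
    | Sum.inl i => if i ∈ I ∧ i ≠ j then X (Sum.inl i) * X (Sum.inl j) else X (Sum.inl i)
    | Sum.inr k => X (Sum.inr k))

end

/-!
A polynomial lies in `I_ξ^m`, `I_ξ` being generated by the variables vanishing at `ξ`, iff each of
its monomials has degree `≥ m` in those variables, i.e. iff its weighted order as a power series
(weight `1` on the vanishing variables, `0` on the others) is `≥ m`. Over a domain the weighted
order is additive on products. Hence `I_ξ^m` is saturated with respect to the units of `O_ξ`, so
that `Eord_ξ(J) ≥ m ↔ J ⊆ I_ξ^m`, and `g^N ∈ I_ξ^(N*m) ↔ g ∈ I_ξ^m`.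

If `ξ_1 = 0`, the monomial `x_1^k x'^d` has `I_ξ`-degree `k` plus the `I_ξ'`-degree of `x'^d`, so
`f ∈ I_ξ^c` iff `a_{f,k} ∈ I_ξ'^(c-k)` for all `k < c`; raising to the powers `c!/(c-k)` turns this
into `C(P,c) ⊆ I_ξ'^(c!) ↔ P ⊆ I_ξ^c`. On `{ξ_1 = 0}` the second locus is therefore
`{Eord_ξ(P) ≥ c}`, which is the `E`-top locus because `c` is the maximal `E`-order, and the
`E`-top locus lies on `{ξ_1 = 0}` by hypothesis.
-/

theorem ENat.natCast_le_sSup_image_natCast_iff {A : Set ℕ} (hA : IsLowerSet A) (hne : A.Nonempty)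
    (n : ℕ) : (n : ℕ∞) ≤ sSup ((↑) '' A) ↔ n ∈ A := by
  refine ⟨fun h => ?_, fun h => le_sSup ⟨n, h, rfl⟩⟩
  cases n with
  | zero => exact hA (Nat.zero_le _) hne.some_mem
  | succ m =>
    rw [Nat.cast_succ, ENat.add_one_le_iff (ENat.natCast_ne_top m), lt_sSup_iff] at h
    obtain ⟨_, ⟨a, ha, rfl⟩, hma⟩ := h
    exact hA (Nat.cast_lt.1 hma) ha

namespace MvPolynomial

open Finsupp (weight)

variable {σ τ R : Type*}

section CommSemiring

variable [CommSemiring R] {S : Set σ} {n : ℕ} {f : MvPolynomial σ R}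

theorem monomial_mem_span_X_image_pow (S : Set σ) (d : σ →₀ ℕ) (a : R) :
    monomial d a ∈ Ideal.span (X '' S) ^ weight (S.indicator 1) d := by
  classical
  induction d using Finsupp.induction generalizing a with
  | zero => simp
  | single_add i k d _ _ ih =>
    have hX : (X i ^ k : MvPolynomial σ R) ∈
        Ideal.span (X '' S) ^ weight (S.indicator 1) (Finsupp.single i k) := by
      by_cases hi : i ∈ S
      · have hXi : (X i : MvPolynomial σ R) ∈ Ideal.span (X '' S) := Ideal.subset_span ⟨i, hi, rfl⟩
        simpa [Finsupp.weight_single, hi] using Ideal.pow_mem_pow hXi k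
      · simp [Finsupp.weight_single, hi]
    rw [monomial_single_add, map_add, pow_add]
    exact Ideal.mul_mem_mul hX (ih a)

theorem one_le_weightedOrder_of_mem_span_X_image (h : f ∈ Ideal.span (X '' S)) :
    1 ≤ (f : MvPowerSeries σ R).weightedOrder (S.indicator 1) := by
  refine MvPowerSeries.nat_le_weightedOrder _ fun d hd => ?_
  rw [coeff_coe, ← notMem_support_iff]
  intro hmem
  obtain ⟨i, hi, hdi⟩ := mem_ideal_span_X_image.1 h d hmem
  have := Finsupp.le_weight_of_ne_zero' (S.indicator (1 : σ → ℕ)) hdi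
  simp [hi] at this
  omega

theorem le_weightedOrder_of_mem_span_X_image_pow (h : f ∈ Ideal.span (X '' S) ^ n) :
    (n : ℕ∞) ≤ (f : MvPowerSeries σ R).weightedOrder (S.indicator 1) := by
  induction n generalizing f with
  | zero => simp
  | succ n ih =>
    rw [pow_succ] at h
    refine Submodule.mul_induction_on h (fun g hg g' hg' => ?_) (fun g g' hg hg' => ?_)
    · rw [coe_mul, Nat.cast_succ]
      exact (add_le_add (ih hg) (one_le_weightedOrder_of_mem_span_X_image hg')).trans
        (MvPowerSeries.le_weightedOrder_mul _)
    · rw [coe_add]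
      exact (le_min hg hg').trans (MvPowerSeries.min_weightedOrder_le_add _)

theorem mem_span_X_image_pow_iff_le_weightedOrder :
    f ∈ Ideal.span (X '' S) ^ n ↔
      (n : ℕ∞) ≤ (f : MvPowerSeries σ R).weightedOrder (S.indicator 1) := by
  refine ⟨le_weightedOrder_of_mem_span_X_image_pow, fun h => ?_⟩
  rw [f.as_sum]
  refine Ideal.sum_mem _ fun d hd => Ideal.pow_le_pow_right ?_ (monomial_mem_span_X_image_pow S d _)
  refine ENat.natCast_le_natCast.1 (h.trans (MvPowerSeries.weightedOrder_le _ ?_))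
  rwa [coeff_coe, ← mem_support_iff]

theorem mem_span_X_image_pow_iff :
    f ∈ Ideal.span (X '' S) ^ n ↔ ∀ d ∈ f.support, n ≤ weight (S.indicator 1) d := by
  rw [mem_span_X_image_pow_iff_le_weightedOrder]
  refine ⟨fun h d hd => ENat.natCast_le_natCast.1 (h.trans (MvPowerSeries.weightedOrder_le _ ?_)),
    fun h => MvPowerSeries.nat_le_weightedOrder _ fun d hd => ?_⟩
  · rwa [coeff_coe, ← mem_support_iff]
  · rw [coeff_coe, ← notMem_support_iff]
    exact fun hmem => (h d hmem).not_gt hd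

theorem rename_mem_span_X_image_pow_iff (e : σ ≃ τ) :
    rename e f ∈ Ideal.span (X '' (e '' S)) ^ n ↔ f ∈ Ideal.span (X '' S) ^ n := by
  have hmap : Ideal.span (X '' (e '' S)) ^ n =
      (Ideal.span (X '' S) ^ n).map (renameEquiv R e).toRingEquiv := by
    rw [Ideal.map_pow, Ideal.map_span, Set.image_image, Set.image_image]
    simp
  rw [hmap]
  exact Ideal.apply_mem_of_equiv_iff

theorem weight_indicator_optionElim {S : Set (Option σ)} (hS : none ∈ S) (d : σ →₀ ℕ) (k : ℕ) :
    weight (S.indicator 1) (d.optionElim k) = k + weight ((some ⁻¹' S).indicator 1) d := by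
  rw [Finsupp.weight_apply, Finsupp.sum_option_index _ (fun i c => c • S.indicator 1 i)
    (fun _ => zero_smul ℕ _) (fun _ _ _ => add_smul _ _ _)]
  simp only [Finsupp.optionElim_apply_eq_elim, Option.elim_none, hS, Set.indicator_of_mem,
    Pi.one_apply, smul_eq_mul, mul_one, Finsupp.some_optionElim, Finsupp.weight_apply,
    Nat.add_left_cancel_iff]
  rfl

theorem mem_span_X_image_pow_iff_optionEquivLeft_coeff {S : Set (Option σ)} (hS : none ∈ S)
    {f : MvPolynomial (Option σ) R} :
    f ∈ Ideal.span (X '' S) ^ n ↔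
      ∀ k < n, (optionEquivLeft R σ f).coeff k ∈ Ideal.span (X '' (some ⁻¹' S)) ^ (n - k) := by
  simp_rw [mem_span_X_image_pow_iff, mem_support_iff, optionEquivLeft_coeff_coeff]
  constructor
  · intro h k _ d hd
    have := h _ hd
    rw [weight_indicator_optionElim hS] at this
    omega
  · intro h d hd
    rw [← d.optionElim_some, weight_indicator_optionElim hS]
    rw [← d.optionElim_some] at hd
    by_cases hk : d none < n
    · have := h _ hk _ hd
      omega
    · omega

end CommSemiring

section IsDomain

variable [CommRing R] [IsDomain R] {S : Set σ} {n : ℕ} {f : MvPolynomial σ R}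

theorem mem_span_X_image_pow_of_mul_mem {u : MvPolynomial σ R}
    (h : f * u ∈ Ideal.span (X '' S) ^ n) (hu : u ∉ Ideal.span (X '' S)) :
    f ∈ Ideal.span (X '' S) ^ n := by
  rw [← pow_one (Ideal.span _), mem_span_X_image_pow_iff_le_weightedOrder, not_le, Nat.cast_one,
    Order.lt_one_iff] at hu
  rw [mem_span_X_image_pow_iff_le_weightedOrder, coe_mul, MvPowerSeries.weightedOrder_mul, hu,
    add_zero] at h
  exact mem_span_X_image_pow_iff_le_weightedOrder.2 h

theorem pow_mem_span_X_image_pow_mul_iff {N : ℕ} (hN : N ≠ 0) :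
    f ^ N ∈ Ideal.span (X '' S) ^ (N * n) ↔ f ∈ Ideal.span (X '' S) ^ n := by
  have hpow : ((f ^ N : MvPolynomial σ R) : MvPowerSeries σ R).weightedOrder (S.indicator 1) =
      N * (f : MvPowerSeries σ R).weightedOrder (S.indicator 1) := by
    simpa using MvPowerSeries.weightedOrder_prod (S.indicator 1) (fun _ => (f : MvPowerSeries σ R))
      (Finset.range N)
  rw [mem_span_X_image_pow_iff_le_weightedOrder, mem_span_X_image_pow_iff_le_weightedOrder, hpow,
    Nat.cast_mul, ENat.mul_le_mul_left_iff (by exact_mod_cast hN) (ENat.natCast_ne_top N)]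

end IsDomain

end MvPolynomial

section

variable {K : Type} {s r : ℕ}

theorem varEquiv_inl_zero : varEquiv s r (Sum.inl 0) = none := by
  simp [varEquiv, optSum]

theorem resPt_eq_comp_varEquiv_symm (ξ : BV (s + 1) r → K) :
    resPt K s r ξ = ξ ∘ (varEquiv s r).symm ∘ some := by
  funext v
  have hv : (varEquiv s r).symm (some v) = Sum.elim (Sum.inl ∘ Fin.succ) Sum.inr v := by
    rw [Equiv.symm_apply_eq]
    rcases v with i | j <;> simp [varEquiv, optSum]
  rw [Function.comp_apply, Function.comp_apply, hv]
  rcases v with i | j <;> rfl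

variable [Field K]

theorem Ivan_eq_span (ξ : BV s r → K) : Ivan K s r ξ = Ideal.span (X '' (ξ ⁻¹' {0})) := by
  rw [Ivan]
  congr 1
  ext p
  simp [eq_comm]

theorem Ivan_le_mAt (ξ : BV s r → K) : Ivan K s r ξ ≤ mAt K s r ξ := by
  rw [Ivan_eq_span, Ideal.span_le]
  rintro _ ⟨i, hi, rfl⟩
  simpa [mAt] using hi

theorem comap_map_Ivan_pow (ξ : BV s r → K) (n : ℕ) :
    ((Ivan K s r ξ ^ n).map (algebraMap (BR K s r) (Oloc K s r ξ))).comap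
      (algebraMap (BR K s r) (Oloc K s r ξ)) = Ivan K s r ξ ^ n := by
  refine le_antisymm (fun f hf => ?_) Ideal.le_comap_map
  obtain ⟨⟨a, u⟩, h⟩ :=
    (IsLocalization.mem_map_algebraMap_iff (mAt K s r ξ).primeCompl _).1 (Ideal.mem_comap.1 hf)
  rw [← map_mul, (IsLocalization.injective _ (mAt K s r ξ).primeCompl_le_nonZeroDivisors).eq_iff]
    at h
  have hu : (u : BR K s r) ∉ Ivan K s r ξ := fun hu => u.2 (Ivan_le_mAt ξ hu)
  have ha : f * u ∈ Ivan K s r ξ ^ n := h ▸ a.2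
  rw [Ivan_eq_span] at ha hu ⊢
  exact mem_span_X_image_pow_of_mul_mem ha hu

theorem natCast_le_Eord_iff (ξ : BV s r → K) (J : Ideal (BR K s r)) (n : ℕ) :
    (n : ℕ∞) ≤ Eord K s r ξ J ↔ J ≤ Ivan K s r ξ ^ n := by
  simp_rw [Eord, ← Ideal.map_pow, Ideal.map_le_iff_le_comap, comap_map_Ivan_pow]
  exact ENat.natCast_le_sSup_image_natCast_iff
    (fun _ _ hab hb => hb.trans (Ideal.pow_le_pow_right hab)) ⟨0, by simp⟩ n

theorem mem_Ivan_pow_iff_coeffAt {ξ : BV (s + 1) r → K} (hξ : ξ (Sum.inl 0) = 0) {c : ℕ}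
    {f : BR K (s + 1) r} :
    f ∈ Ivan K (s + 1) r ξ ^ c ↔
      ∀ k < c, coeffAt K s r f k ∈ Ivan K s r (resPt K s r ξ) ^ (c - k) := by
  have hnone : none ∈ varEquiv s r '' (ξ ⁻¹' {0}) := ⟨Sum.inl 0, hξ, varEquiv_inl_zero⟩
  rw [Ivan_eq_span, Ivan_eq_span, ← rename_mem_span_X_image_pow_iff (varEquiv s r),
    mem_span_X_image_pow_iff_optionEquivLeft_coeff hnone, Equiv.image_eq_preimage_symm,
    resPt_eq_comp_varEquiv_symm]
  rfl

theorem coeffIdeal_le_Ivan_pow_factorial_iff {ξ : BV (s + 1) r → K} (hξ : ξ (Sum.inl 0) = 0)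
    {P : Ideal (BR K (s + 1) r)} {c : ℕ} :
    coeffIdeal K s r P c ≤ Ivan K s r (resPt K s r ξ) ^ c.factorial ↔
      P ≤ Ivan K (s + 1) r ξ ^ c := by
  have hpow : ∀ k < c, ∀ a : BR K s r, a ^ (c.factorial / (c - k)) ∈
      Ivan K s r (resPt K s r ξ) ^ c.factorial ↔ a ∈ Ivan K s r (resPt K s r ξ) ^ (c - k) := by
    intro k hk a
    have hdvd : c - k ∣ c.factorial := Nat.dvd_factorial (by omega) (Nat.sub_le c k)
    have hN : c.factorial / (c - k) ≠ 0 :=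
      (Nat.div_pos (Nat.le_of_dvd c.factorial_pos hdvd) (by omega)).ne'
    rw [Ivan_eq_span, ← pow_mem_span_X_image_pow_mul_iff (f := a) (n := c - k) hN,
      Nat.div_mul_cancel hdvd]
  rw [coeffIdeal, Ideal.span_le]
  constructor
  · intro h f hf
    rw [mem_Ivan_pow_iff_coeffAt hξ]
    exact fun k hk => (hpow k hk _).1 (h ⟨f, hf, k, hk, rfl⟩)
  · rintro h _ ⟨f, hf, k, hk, rfl⟩
    exact (hpow k hk _).2 ((mem_Ivan_pow_iff_coeffAt hξ).1 (h hf) k hk)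

end

theorem Etop_eq_Etop_coeffIdeal_general
    (K : Type) [Field K] (s r : ℕ)
    (P : Ideal (BR K (s + 1) r)) (c : ℕ)
    (hmax : ∀ η ∈ Wset K (s + 1) r, Eord K (s + 1) r η P ≤ (c : ℕ∞))
    (hV : ∀ ξ ∈ Wset K (s + 1) r, Eord K (s + 1) r ξ P = (c : ℕ∞) → ξ (Sum.inl 0) = 0) :
    {ξ : BV (s + 1) r → K | ξ ∈ Wset K (s + 1) r ∧ Eord K (s + 1) r ξ P = (c : ℕ∞)} =
      {ξ : BV (s + 1) r → K | ξ ∈ Wset K (s + 1) r ∧ ξ (Sum.inl 0) = 0 ∧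
        (Nat.factorial c : ℕ∞) ≤ Eord K s r (resPt K s r ξ) (coeffIdeal K s r P c)} := by
  ext ξ
  constructor
  · rintro ⟨hW, hE⟩
    have hξ := hV ξ hW hE
    refine ⟨hW, hξ, ?_⟩
    rw [natCast_le_Eord_iff, coeffIdeal_le_Ivan_pow_factorial_iff hξ, ← natCast_le_Eord_iff, hE]
  · rintro ⟨hW, hξ, hC⟩
    rw [natCast_le_Eord_iff, coeffIdeal_le_Ivan_pow_factorial_iff hξ, ← natCast_le_Eord_iff] at hC
    exact ⟨hW, (hmax ξ hW).antisymm hC⟩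

/-- suppose `c > 0` is the maximal `E`-order of `P` on `W`, attained on `W`,
and that every point of `W` where the `E`-order equals `c` lies on the hypersurface
`V = {x_1 = 0}` (static property of a hypersurface of `E`-maximal contact).  Then the
`E`-top locus of `P` equals the `E`-top locus of the coefficient ideal with control `c!`:
`{ξ ∈ W : Eord_ξ(P) = c} = {ξ ∈ W : ξ_1 = 0 ∧ Eord_{ξ'}(C(P,c)) ≥ c!}`. -/
theorem Etop_eq_Etop_coeffIdeal
    (K : Type) [Field K] [IsAlgClosed K] (s r : ℕ)
    (P : Ideal (BR K (s + 1) r)) (c : ℕ) (hc : 0 < c)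
    (hmax : ∀ η ∈ Wset K (s + 1) r, Eord K (s + 1) r η P ≤ (c : ℕ∞))
    (hatt : ∃ ξ₀ ∈ Wset K (s + 1) r, Eord K (s + 1) r ξ₀ P = (c : ℕ∞))
    (hV : ∀ ξ ∈ Wset K (s + 1) r, Eord K (s + 1) r ξ P = (c : ℕ∞) → ξ (Sum.inl 0) = 0) :
    {ξ : BV (s + 1) r → K | ξ ∈ Wset K (s + 1) r ∧ Eord K (s + 1) r ξ P = (c : ℕ∞)} =
      {ξ : BV (s + 1) r → K | ξ ∈ Wset K (s + 1) r ∧ ξ (Sum.inl 0) = 0 ∧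
        (Nat.factorial c : ℕ∞) ≤ Eord K s r (resPt K s r ξ) (coeffIdeal K s r P c)} :=
  Etop_eq_Etop_coeffIdeal_general K s r P c hmax hV
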